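/- For every triad (b,c,d) in the real Cayley–Dickson algebra 𝔸ₙ (all εᵢ = 1), either all three associators [b,d,c], [b,c,d], [c,b,d] are nonzero, or exactly one of them is nonzero and the other two vanish. -/

import Mathlib

noncomputable section

/-- The real Cayley–Dickson algebra carrier: `CD 0 = ℝ`, `CD (n+1) = CD n × CD n`. -/
def CD : ℕ → Type
  | 0 => ℝ
  | n + 1 => CD n × CD n

instance CD.instAddCommGroup : (n : ℕ) → AddCommGroup (CD n)
  | 0 => inferInstanceAs (AddCommGroup ℝ)
  | n + 1 =>
    letI := CD.instAddCommGroup n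
    inferInstanceAs (AddCommGroup (CD n × CD n))

instance CD.instModule : (n : ℕ) → Module ℝ (CD n)
  | 0 => inferInstanceAs (Module ℝ ℝ)
  | n + 1 =>
    letI := CD.instModule n
    inferInstanceAs (Module ℝ (CD n × CD n))

/-- The unit of the Cayley–Dickson algebra. -/
def CD.one : (n : ℕ) → CD n
  | 0 => (1 : ℝ)
  | n + 1 => (CD.one n, 0)

/-- Conjugation: `(a, b)* = (a*, -b)`, identity on `ℝ`. -/
def CD.conj : (n : ℕ) → CD n → CD n
  | 0, a => a
  | n + 1, x => (CD.conj n x.1, -x.2)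

/-- Cayley–Dickson multiplication with sign vector `ε`:
`(a,b)·(c,d) = (a·c − ε (n+1) • (d*·b), d·a + b·c*)`. -/
def CD.mul (ε : ℕ → ℝ) : (n : ℕ) → CD n → CD n → CD n
  | 0, a, c => (show ℝ from a) * (show ℝ from c)
  | n + 1, x, y =>
    (CD.mul ε n x.1 y.1 - ε (n + 1) • CD.mul ε n (CD.conj n y.2) x.2,
     CD.mul ε n y.2 x.1 + CD.mul ε n x.2 (CD.conj n y.1))

/-- The standard basis element `e α` of `CD n`, for `α ⊆ {1,…,n}`. -/
def CD.basis : (n : ℕ) → Finset ℕ → CD n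
  | 0, _ => (1 : ℝ)
  | n + 1, α =>
    if n + 1 ∈ α then ((0 : CD n), CD.basis n (α.erase (n + 1)))
    else (CD.basis n α, (0 : CD n))

/-- `α` indexes a pure basis element of `CD n`. -/
def CD.IsPure (n : ℕ) (α : Finset ℕ) : Prop :=
  α.Nonempty ∧ α ⊆ Finset.Icc 1 n

/-- The associator `[x,y,z] = (x·y)·z − x·(y·z)`. -/
def CD.assoc (ε : ℕ → ℝ) (n : ℕ) (x y z : CD n) : CD n :=
  CD.mul ε n (CD.mul ε n x y) z - CD.mul ε n x (CD.mul ε n y z)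

/-- A triad: indices of three pairwise distinct pure basis elements `b, c, d`
with `d ≠ ±(b·c)` (all signs `εᵢ = 1`). -/
def CD.IsTriad (n : ℕ) (α β γ : Finset ℕ) : Prop :=
  CD.IsPure n α ∧ CD.IsPure n β ∧ CD.IsPure n γ ∧
  α ≠ β ∧ α ≠ γ ∧ β ≠ γ ∧
  CD.basis n γ ≠ CD.mul (fun _ => 1) n (CD.basis n α) (CD.basis n β) ∧
  CD.basis n γ ≠ -CD.mul (fun _ => 1) n (CD.basis n α) (CD.basis n β)

/-- Multiplication with all signs `εᵢ = 1`. -/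
abbrev CD.mul1 (n : ℕ) : CD n → CD n → CD n := CD.mul (fun _ => 1) n

/-- Associator with all signs `εᵢ = 1`. -/
abbrev CD.assoc1 (n : ℕ) : CD n → CD n → CD n → CD n := CD.assoc (fun _ => 1) n

/-!
Basis elements multiply up to sign, `e_α e_β = ± e_{α ∆ β}`, and distinct pure basis elements
anticommute. Hence the associator of three basis elements is `(L - R) • e_{α ∆ β ∆ γ}`, where
`L, R = ±1` are the signs of `(e_α e_β) e_γ` and `e_α (e_β e_γ)`. For a triad `(b, c, d)` let
`A, B, C` be the signs of `(bc)d`, `b(cd)`, `(bd)c`. Anticommutativity of `c` with `d` and of `b`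
with `c`, and (using `d ≠ ±bc`) of `c` with `bd`, shows that `[b,d,c]`, `[b,c,d]`, `[c,b,d]` vanish
exactly when `C = -B`, `A = B`, `A = C` respectively. For signs, any one of these relations
forces exactly one other, so either none or exactly two of them hold.
-/

open Finset
open scoped symmDiff

lemma Finset.erase_symmDiff {α : Type*} [DecidableEq α] (s t : Finset α) (a : α) :
    (s ∆ t).erase a = s.erase a ∆ t.erase a := by
  ext x
  simp only [mem_erase, mem_symmDiff]
  tauto

lemma Finset.erase_subset_Icc_of_subset_Icc_succ {n : ℕ} {s : Finset ℕ}
    (h : s ⊆ Icc 1 (n + 1)) : s.erase (n + 1) ⊆ Icc 1 n := by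
  intro x hx
  have := h (mem_of_mem_erase hx)
  simp only [mem_Icc, mem_erase] at this hx ⊢
  omega

namespace CD

section Algebra

variable {n : ℕ}

lemma ext_succ {x y : CD (n + 1)} (h₁ : x.1 = y.1) (h₂ : x.2 = y.2) : x = y := Prod.ext h₁ h₂

@[simp] lemma smul_fst (r : ℝ) (x : CD (n + 1)) : (r • x).1 = r • x.1 := rfl
@[simp] lemma smul_snd (r : ℝ) (x : CD (n + 1)) : (r • x).2 = r • x.2 := rfl
@[simp] lemma neg_fst (x : CD (n + 1)) : (-x).1 = -x.1 := rfl
@[simp] lemma neg_snd (x : CD (n + 1)) : (-x).2 = -x.2 := rfl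
@[simp] lemma zero_fst : (0 : CD (n + 1)).1 = 0 := rfl
@[simp] lemma zero_snd : (0 : CD (n + 1)).2 = 0 := rfl
@[simp] lemma conj_fst (x : CD (n + 1)) : (CD.conj (n + 1) x).1 = CD.conj n x.1 := rfl
@[simp] lemma conj_snd (x : CD (n + 1)) : (CD.conj (n + 1) x).2 = -x.2 := rfl

@[simp] lemma mul_fst (ε : ℕ → ℝ) (x y : CD (n + 1)) :
    (CD.mul ε (n + 1) x y).1 = CD.mul ε n x.1 y.1 - ε (n + 1) • CD.mul ε n (CD.conj n y.2) x.2 :=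
  rfl

@[simp] lemma mul_snd (ε : ℕ → ℝ) (x y : CD (n + 1)) :
    (CD.mul ε (n + 1) x y).2 = CD.mul ε n y.2 x.1 + CD.mul ε n x.2 (CD.conj n y.1) := rfl

lemma conj_smul : ∀ (n : ℕ) (r : ℝ) (x : CD n), CD.conj n (r • x) = r • CD.conj n x
  | 0, _, _ => rfl
  | n + 1, r, x => ext_succ (by simp [conj_smul n]) (by simp)

lemma conj_zero (n : ℕ) : CD.conj n 0 = 0 := by
  simpa using conj_smul n 0 0

mutual

lemma smul_mul (ε : ℕ → ℝ) : ∀ (n : ℕ) (r : ℝ) (x y : CD n),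
    CD.mul ε n (r • x) y = r • CD.mul ε n x y
  | 0, r, x, y => mul_assoc r (show ℝ from x) y
  | n + 1, r, x, y => ext_succ
    (by simp [smul_mul ε n, mul_smul ε n, smul_sub, smul_comm r (ε (n + 1))])
    (by simp [smul_mul ε n, mul_smul ε n])

lemma mul_smul (ε : ℕ → ℝ) : ∀ (n : ℕ) (r : ℝ) (x y : CD n),
    CD.mul ε n x (r • y) = r • CD.mul ε n x y
  | 0, r, x, y => mul_left_comm (show ℝ from x) r y
  | n + 1, r, x, y => ext_succ
    (by simp [smul_mul ε n, mul_smul ε n, conj_smul, smul_sub, smul_comm r (ε (n + 1))])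
    (by simp [smul_mul ε n, mul_smul ε n, conj_smul])

end

lemma mul_zero (ε : ℕ → ℝ) (n : ℕ) (x : CD n) : CD.mul ε n x 0 = 0 := by
  simpa using mul_smul ε n 0 x 0

lemma zero_mul (ε : ℕ → ℝ) (n : ℕ) (x : CD n) : CD.mul ε n 0 x = 0 := by
  simpa using smul_mul ε n 0 0 x

end Algebra

section Basis

variable {n : ℕ}

@[simp] lemma basis_fst (α : Finset ℕ) :
    (CD.basis (n + 1) α).1 = if n + 1 ∈ α then 0 else CD.basis n α := by
  by_cases h : n + 1 ∈ α <;> simp [CD.basis, h]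

@[simp] lemma basis_snd (α : Finset ℕ) :
    (CD.basis (n + 1) α).2 = if n + 1 ∈ α then CD.basis n (α.erase (n + 1)) else 0 := by
  by_cases h : n + 1 ∈ α <;> simp [CD.basis, h]

lemma basis_ne_zero : ∀ (n : ℕ) (α : Finset ℕ), CD.basis n α ≠ 0
  | 0, _ => show (1 : ℝ) ≠ 0 from one_ne_zero
  | n + 1, α => fun h => by
    by_cases hα : n + 1 ∈ α
    · exact basis_ne_zero n _ (by simpa [hα] using congrArg Prod.snd h)
    · exact basis_ne_zero n α (by simpa [hα] using congrArg Prod.fst h)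

/-- The sign of `e_α* = ± e_α`. -/
def conjSign (α : Finset ℕ) : ℝ := if α = ∅ then 1 else -1

lemma conj_basis : ∀ (n : ℕ) (α : Finset ℕ), α ⊆ Icc 1 n →
    CD.conj n (CD.basis n α) = conjSign α • CD.basis n α
  | 0, α, h => by
    obtain rfl : α = ∅ := subset_empty.mp (by simpa using h)
    show (1 : ℝ) = conjSign ∅ * 1
    simp [conjSign]
  | n + 1, α, h => by
    by_cases hα : n + 1 ∈ α
    · have : α ≠ ∅ := ne_empty_of_mem hα
      refine ext_succ ?_ ?_ <;> simp [hα, conjSign, this, conj_zero]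
    · have : α ⊆ Icc 1 n := erase_eq_of_notMem hα ▸ erase_subset_Icc_of_subset_Icc_succ h
      refine ext_succ ?_ ?_ <;> simp [hα, conj_basis n α this]

/-- The sign in `e_α · e_β = mulSign ε n α β • e_{α ∆ β}`, following the doubling formula. -/
def mulSign (ε : ℕ → ℝ) : ℕ → Finset ℕ → Finset ℕ → ℝ
  | 0, _, _ => 1
  | n + 1, α, β =>
    if n + 1 ∈ α then
      if n + 1 ∈ β then
        -ε (n + 1) * conjSign (β.erase (n + 1)) * mulSign ε n (β.erase (n + 1)) (α.erase (n + 1))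
      else conjSign β * mulSign ε n (α.erase (n + 1)) β
    else
      if n + 1 ∈ β then mulSign ε n (β.erase (n + 1)) α
      else mulSign ε n α β

lemma mul_basis (ε : ℕ → ℝ) : ∀ (n : ℕ) (α β : Finset ℕ), α ⊆ Icc 1 n → β ⊆ Icc 1 n →
    CD.mul ε n (CD.basis n α) (CD.basis n β) = mulSign ε n α β • CD.basis n (α ∆ β)
  | 0, _, _, _, _ => rfl
  | n + 1, α, β, hα, hβ => by
    have hα' := erase_subset_Icc_of_subset_Icc_succ hα
    have hβ' := erase_subset_Icc_of_subset_Icc_succ hβ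
    by_cases hA : n + 1 ∈ α <;> by_cases hB : n + 1 ∈ β
    · have hAB : n + 1 ∉ α ∆ β := by simp [mem_symmDiff, hA, hB]
      have hidx : β.erase (n + 1) ∆ α.erase (n + 1) = α ∆ β := by
        rw [← erase_symmDiff, symmDiff_comm, erase_eq_of_notMem hAB]
      refine ext_succ ?_ ?_ <;>
        simp [hA, hB, hAB, mulSign, conj_zero, mul_zero, conj_basis n _ hβ', smul_mul,
          mul_basis ε n _ _ hβ' hα', hidx, smul_smul, mul_assoc]
    · rw [erase_eq_of_notMem hB] at hβ'
      have hidx : α.erase (n + 1) ∆ β = (α ∆ β).erase (n + 1) := by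
        rw [erase_symmDiff, erase_eq_of_notMem hB]
      refine ext_succ ?_ ?_ <;>
        simp [hA, hB, mulSign, mem_symmDiff, conj_zero, mul_zero, zero_mul, conj_basis n _ hβ',
          mul_smul, mul_basis ε n _ _ hα' hβ', hidx, smul_smul]
    · rw [erase_eq_of_notMem hA] at hα'
      have hidx : β.erase (n + 1) ∆ α = (α ∆ β).erase (n + 1) := by
        rw [erase_symmDiff, erase_eq_of_notMem hA, symmDiff_comm]
      refine ext_succ ?_ ?_ <;>
        simp [hA, hB, mulSign, mem_symmDiff, conj_zero, mul_zero, mul_basis ε n _ _ hβ' hα', hidx]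
    · rw [erase_eq_of_notMem hA] at hα'
      rw [erase_eq_of_notMem hB] at hβ'
      refine ext_succ ?_ ?_ <;>
        simp [hA, hB, mulSign, mem_symmDiff, conj_zero, mul_zero, zero_mul,
          mul_basis ε n _ _ hα' hβ']

end Basis

section Signs

variable (ε : ℕ → ℝ)

lemma conjSign_of_nonempty {α : Finset ℕ} (h : α.Nonempty) : conjSign α = -1 :=
  if_neg h.ne_empty

lemma mulSign_eq_one_or_neg_one (hε : ∀ i, ε i = 1 ∨ ε i = -1) :
    ∀ (n : ℕ) (α β : Finset ℕ), mulSign ε n α β = 1 ∨ mulSign ε n α β = -1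
  | 0, _, _ => Or.inl rfl
  | n + 1, α, β => by
    have hc (s : Finset ℕ) : conjSign s = 1 ∨ conjSign s = -1 := by
      unfold conjSign; split <;> simp
    unfold mulSign
    split_ifs
    · rcases hε (n + 1) with h | h <;> rcases hc (β.erase (n + 1)) with h' | h' <;>
        rcases mulSign_eq_one_or_neg_one hε n (β.erase (n + 1)) (α.erase (n + 1)) with h'' | h'' <;>
        simp [h, h', h'']
    · rcases hc β with h' | h' <;>
        rcases mulSign_eq_one_or_neg_one hε n (α.erase (n + 1)) β with h'' | h'' <;>
        simp [h', h'']
    · exact mulSign_eq_one_or_neg_one hε n _ _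
    · exact mulSign_eq_one_or_neg_one hε n _ _

lemma mulSign_empty_right : ∀ (n : ℕ) (α : Finset ℕ), mulSign ε n α ∅ = 1
  | 0, _ => rfl
  | n + 1, α => by
    by_cases hα : n + 1 ∈ α <;> simp [mulSign, hα, conjSign, mulSign_empty_right n]

lemma mulSign_empty_left : ∀ (n : ℕ) (β : Finset ℕ), mulSign ε n ∅ β = 1
  | 0, _ => rfl
  | n + 1, β => by
    by_cases hβ : n + 1 ∈ β <;> simp [mulSign, hβ, mulSign_empty_left n, mulSign_empty_right]

lemma mulSign_anticomm : ∀ (n : ℕ) {α β : Finset ℕ}, CD.IsPure n α → CD.IsPure n β → α ≠ β →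
    mulSign ε n α β = -mulSign ε n β α
  | 0, α, _, ⟨⟨x, hx⟩, hα⟩, _, _ => by simpa using hα hx
  | n + 1, α, β, ⟨hαne, hα⟩, ⟨hβne, hβ⟩, hne => by
    by_cases hA : n + 1 ∈ α <;> by_cases hB : n + 1 ∈ β
    · have hα' := erase_subset_Icc_of_subset_Icc_succ hα
      have hβ' := erase_subset_Icc_of_subset_Icc_succ hβ
      have hne' : α.erase (n + 1) ≠ β.erase (n + 1) := fun h =>
        hne (by rw [← insert_erase hA, ← insert_erase hB, h])
      simp only [mulSign, hA, hB, if_true]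
      rcases (α.erase (n + 1)).eq_empty_or_nonempty with hα₀ | hα₀
      · have hβ₀ : (β.erase (n + 1)).Nonempty := nonempty_iff_ne_empty.mpr (hα₀ ▸ hne'.symm)
        rw [hα₀, conjSign_of_nonempty hβ₀, mulSign_empty_left, mulSign_empty_right, conjSign,
          if_pos rfl]
        ring
      rcases (β.erase (n + 1)).eq_empty_or_nonempty with hβ₀ | hβ₀
      · rw [hβ₀, conjSign_of_nonempty hα₀, mulSign_empty_left, mulSign_empty_right, conjSign,
          if_pos rfl]
        ring
      rw [conjSign_of_nonempty hα₀, conjSign_of_nonempty hβ₀,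
        mulSign_anticomm n ⟨hβ₀, hβ'⟩ ⟨hα₀, hα'⟩ hne'.symm]
      ring
    · simp [mulSign, hA, hB, conjSign_of_nonempty hβne]
    · simp [mulSign, hA, hB, conjSign_of_nonempty hαne]
    · have hα' := erase_eq_of_notMem hA ▸ erase_subset_Icc_of_subset_Icc_succ hα
      have hβ' := erase_eq_of_notMem hB ▸ erase_subset_Icc_of_subset_Icc_succ hβ
      simpa [mulSign, hA, hB] using mulSign_anticomm n ⟨hαne, hα'⟩ ⟨hβne, hβ'⟩ hne

/-- The sign of `(e_α e_β) e_γ` relative to `e_{α ∆ β ∆ γ}`. -/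
def leftProductSign (ε : ℕ → ℝ) (n : ℕ) (α β γ : Finset ℕ) : ℝ :=
  mulSign ε n α β * mulSign ε n (α ∆ β) γ

/-- The sign of `e_α (e_β e_γ)` relative to `e_{α ∆ β ∆ γ}`. -/
def rightProductSign (ε : ℕ → ℝ) (n : ℕ) (α β γ : Finset ℕ) : ℝ :=
  mulSign ε n β γ * mulSign ε n α (β ∆ γ)

lemma leftProductSign_eq_one_or_neg_one (hε : ∀ i, ε i = 1 ∨ ε i = -1) (n : ℕ)
    (α β γ : Finset ℕ) : leftProductSign ε n α β γ = 1 ∨ leftProductSign ε n α β γ = -1 := by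
  rcases mulSign_eq_one_or_neg_one ε hε n α β with h | h <;>
    rcases mulSign_eq_one_or_neg_one ε hε n (α ∆ β) γ with h' | h' <;>
    simp [leftProductSign, h, h']

lemma rightProductSign_eq_one_or_neg_one (hε : ∀ i, ε i = 1 ∨ ε i = -1) (n : ℕ)
    (α β γ : Finset ℕ) : rightProductSign ε n α β γ = 1 ∨ rightProductSign ε n α β γ = -1 := by
  rcases mulSign_eq_one_or_neg_one ε hε n β γ with h | h <;>
    rcases mulSign_eq_one_or_neg_one ε hε n α (β ∆ γ) with h' | h' <;>
    simp [rightProductSign, h, h']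

variable {ε} {n : ℕ} {α β γ : Finset ℕ}

lemma leftProductSign_swap (hα : CD.IsPure n α) (hβ : CD.IsPure n β) (hαβ : α ≠ β) :
    leftProductSign ε n β α γ = -leftProductSign ε n α β γ := by
  rw [leftProductSign, leftProductSign, mulSign_anticomm ε n hβ hα hαβ.symm, symmDiff_comm,
    neg_mul]

lemma rightProductSign_swap (hβ : CD.IsPure n β) (hγ : CD.IsPure n γ) (hβγ : β ≠ γ) :
    rightProductSign ε n α γ β = -rightProductSign ε n α β γ := by
  rw [rightProductSign, rightProductSign, mulSign_anticomm ε n hγ hβ hβγ.symm, symmDiff_comm,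
    neg_mul]

lemma rightProductSign_eq_neg_leftProductSign (hβ : CD.IsPure n β)
    (hαγ : CD.IsPure n (α ∆ γ)) (hne : β ≠ α ∆ γ) :
    rightProductSign ε n β α γ = -leftProductSign ε n α γ β := by
  rw [rightProductSign, leftProductSign, mulSign_anticomm ε n hβ hαγ hne, mul_neg]

end Signs

lemma IsPure.symmDiff {n : ℕ} {α β : Finset ℕ} (hα : CD.IsPure n α) (hβ : CD.IsPure n β)
    (hαβ : α ≠ β) : CD.IsPure n (α ∆ β) :=
  ⟨nonempty_iff_ne_empty.mpr (symmDiff_eq_bot.not.mpr hαβ),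
    symmDiff_subset_union.trans (union_subset hα.2 hβ.2)⟩

lemma IsTriad.ne_symmDiff {n : ℕ} {α β γ : Finset ℕ} (h : CD.IsTriad n α β γ) :
    γ ≠ α ∆ β := by
  obtain ⟨⟨-, hα⟩, ⟨-, hβ⟩, -, -, -, -, hγ₁, hγ₂⟩ := h
  rintro rfl
  rw [mul_basis _ n α β hα hβ] at hγ₁ hγ₂
  rcases mulSign_eq_one_or_neg_one _ (fun _ => Or.inl rfl) n α β with hs | hs
  · exact hγ₁ (by rw [hs, one_smul])
  · exact hγ₂ (by rw [hs, neg_one_smul, neg_neg])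

lemma assoc_basis (ε : ℕ → ℝ) (n : ℕ) {α β γ : Finset ℕ} (hα : α ⊆ Icc 1 n)
    (hβ : β ⊆ Icc 1 n) (hγ : γ ⊆ Icc 1 n) :
    CD.assoc ε n (CD.basis n α) (CD.basis n β) (CD.basis n γ) =
      (leftProductSign ε n α β γ - rightProductSign ε n α β γ) • CD.basis n (α ∆ β ∆ γ) := by
  have hαβ : α ∆ β ⊆ Icc 1 n := symmDiff_subset_union.trans (union_subset hα hβ)
  have hβγ : β ∆ γ ⊆ Icc 1 n := symmDiff_subset_union.trans (union_subset hβ hγ)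
  rw [CD.assoc, mul_basis ε n α β hα hβ, smul_mul, mul_basis ε n _ γ hαβ hγ,
    mul_basis ε n β γ hβ hγ, mul_smul, mul_basis ε n α _ hα hβγ, smul_smul, smul_smul,
    ← symmDiff_assoc, ← sub_smul, leftProductSign, rightProductSign]

lemma assoc_basis_eq_zero_iff (ε : ℕ → ℝ) (n : ℕ) {α β γ : Finset ℕ} (hα : α ⊆ Icc 1 n)
    (hβ : β ⊆ Icc 1 n) (hγ : γ ⊆ Icc 1 n) :
    CD.assoc ε n (CD.basis n α) (CD.basis n β) (CD.basis n γ) = 0 ↔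
      leftProductSign ε n α β γ = rightProductSign ε n α β γ := by
  rw [assoc_basis ε n hα hβ hγ, smul_eq_zero, sub_eq_zero, or_iff_left (basis_ne_zero n _)]

end CD

lemma sign_relations_none_or_two {A B C : ℝ} (hA : A = 1 ∨ A = -1) (hB : B = 1 ∨ B = -1)
    (hC : C = 1 ∨ C = -1) :
    (C ≠ -B ∧ A ≠ B ∧ A ≠ C) ∨ (C ≠ -B ∧ A = B ∧ A = C) ∨ (C = -B ∧ A ≠ B ∧ A = C) ∨
      (C = -B ∧ A = B ∧ A ≠ C) := by
  rcases hA with rfl | rfl <;> rcases hB with rfl | rfl <;> rcases hC with rfl | rfl <;> norm_num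

/-- (Non-associativity theorem.) For every triad `(b,c,d)`,
either all three associators `[b,d,c]`, `[b,c,d]`, `[c,b,d]` are nonzero, or
exactly one of them is nonzero and the other two vanish. -/
theorem stmt7 (n : ℕ) (α β γ : Finset ℕ) (h : CD.IsTriad n α β γ)
    (b c d : CD n) (hb : b = CD.basis n α) (hc : c = CD.basis n β)
    (hd : d = CD.basis n γ) :
    (CD.assoc1 n b d c ≠ 0 ∧ CD.assoc1 n b c d ≠ 0 ∧ CD.assoc1 n c b d ≠ 0) ∨
    (CD.assoc1 n b d c ≠ 0 ∧ CD.assoc1 n b c d = 0 ∧ CD.assoc1 n c b d = 0) ∨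
    (CD.assoc1 n b d c = 0 ∧ CD.assoc1 n b c d ≠ 0 ∧ CD.assoc1 n c b d = 0) ∨
    (CD.assoc1 n b d c = 0 ∧ CD.assoc1 n b c d = 0 ∧ CD.assoc1 n c b d ≠ 0) := by
  have hγ_ne := h.ne_symmDiff
  obtain ⟨hα, hβ, hγ, hαβ, hαγ, hβγ, -⟩ := h
  subst hb hc hd
  have hβ_ne : β ≠ α ∆ γ := fun h => hγ_ne (by rw [h, symmDiff_symmDiff_cancel_left])
  simp only [CD.assoc1, ne_eq, CD.assoc_basis_eq_zero_iff _ n hα.2 hβ.2 hγ.2,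
    CD.assoc_basis_eq_zero_iff _ n hα.2 hγ.2 hβ.2, CD.assoc_basis_eq_zero_iff _ n hβ.2 hα.2 hγ.2,
    CD.rightProductSign_swap hβ hγ hβγ, CD.leftProductSign_swap hα hβ hαβ,
    CD.rightProductSign_eq_neg_leftProductSign hβ (hα.symmDiff hγ hαγ) hβ_ne, neg_inj]
  have hε (i : ℕ) : (fun _ => (1 : ℝ)) i = 1 ∨ (fun _ => (1 : ℝ)) i = -1 := Or.inl rfl
  exact sign_relations_none_or_two (CD.leftProductSign_eq_one_or_neg_one _ hε n α β γ)
    (CD.rightProductSign_eq_one_or_neg_one _ hε n α β γ)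
    (CD.leftProductSign_eq_one_or_neg_one _ hε n α γ β)
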